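/- Let (L1,L2) and (L1,L2') be splittings of ℝ^d. Suppose the system has a dichotomy on (L1,L2) with maximal uniformity dimensions (u1,u2) and a dichotomy on (L1,L2') with maximal uniformity dimensions (u1',u2'). Then u1 = u1'. If in addition for every V' ∈ 𝒢_{u2}(L2') one has dim π_{L1}[V'] ≤ u1, where π_{L1} is the projection onto L1 along L2, then u2 ≤ u2'. -/

import Mathlib

open Set Filter Topology

noncomputable section

abbrev Euc (d : ℕ) := EuclideanSpace ℝ (Fin d)

/-- The solution `x(n, x₀)` of `x(n+1) = A(n) x(n)`, `x(0,x₀) = x₀`. -/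
def sol {d : ℕ} (A : ℕ → (Euc d ≃L[ℝ] Euc d)) : ℕ → Euc d → Euc d
  | 0, x => x
  | n + 1, x => A n (sol A n x)

/-- Boundedness of the coefficients `A(n)` and their inverses. -/
def BddSys {d : ℕ} (A : ℕ → (Euc d ≃L[ℝ] Euc d)) : Prop :=
  (∃ c : ℝ, ∀ n : ℕ, ‖(A n : Euc d →L[ℝ] Euc d)‖ ≤ c) ∧
  (∃ c : ℝ, ∀ n : ℕ, ‖((A n).symm : Euc d →L[ℝ] Euc d)‖ ≤ c)

/-- `D1(γ,U)` holds uniformly (constant `C`). -/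
def D1u {d : ℕ} (A : ℕ → (Euc d ≃L[ℝ] Euc d)) (γ : ℝ) (U : Submodule ℝ (Euc d)) : Prop :=
  ∃ C : ℝ, 0 < C ∧
    ∀ m n : ℕ, m ≤ n → ∀ x₀ ∈ U,
      ‖sol A n x₀‖ ≤ C * Real.exp (γ * ((n : ℝ) - (m : ℝ))) * ‖sol A m x₀‖

/-- `D2(γ,U)` holds uniformly (constant `C`). -/
def D2u {d : ℕ} (A : ℕ → (Euc d ≃L[ℝ] Euc d)) (γ : ℝ) (U : Submodule ℝ (Euc d)) : Prop :=
  ∃ C : ℝ, 0 < C ∧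
    ∀ m n : ℕ, m ≤ n → ∀ x₀ ∈ U,
      C * Real.exp (γ * ((n : ℝ) - (m : ℝ))) * ‖sol A m x₀‖ ≤ ‖sol A n x₀‖

/-- `𝒰` is a set of subspaces of `L` whose union is `L`. -/
def IsCover {d : ℕ} (𝒰 : Set (Submodule ℝ (Euc d))) (L : Submodule ℝ (Euc d)) : Prop :=
  (∀ U ∈ 𝒰, U ≤ L) ∧ (⋃ U ∈ 𝒰, (U : Set (Euc d))) = (L : Set (Euc d))

/-- `𝒢_j(L)` : the set of `j`-dimensional subspaces of `L`. -/
def Gr {d : ℕ} (j : ℕ) (L : Submodule ℝ (Euc d)) : Set (Submodule ℝ (Euc d)) :=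
  {U | U ≤ L ∧ Module.finrank ℝ U = j}

/-- The system has a dichotomy on the splitting `(L1,L2)` with uniformity
dimensions `(j1,j2)`. -/
def DichotomyDim0 {d : ℕ} (A : ℕ → (Euc d ≃L[ℝ] Euc d))
    (L1 L2 : Submodule ℝ (Euc d)) (j1 j2 : ℕ) : Prop :=
  IsCompl L1 L2 ∧ IsCover (Gr j1 L1) L1 ∧ IsCover (Gr j2 L2) L2 ∧
  ∃ α : ℝ, 0 < α ∧ (∀ U ∈ Gr j1 L1, D1u A (-α) U) ∧ (∀ U ∈ Gr j2 L2, D2u A α U)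

/-- `(u1,u2)` are maximal uniformity dimensions of a dichotomy on `(L1,L2)`. -/
def MaxUnifDims {d : ℕ} (A : ℕ → (Euc d ≃L[ℝ] Euc d))
    (L1 L2 : Submodule ℝ (Euc d)) (u1 u2 : ℕ) : Prop :=
  DichotomyDim0 A L1 L2 u1 u2 ∧
  ∀ l1 l2 : ℕ, DichotomyDim0 A L1 L2 l1 l2 → l1 ≤ u1 ∧ l2 ≤ u2

/-!
The two halves of a dichotomy are independent: the `L1`-half of one dichotomy and the
`L2'`-half of another combine, at the smaller rate, into a dichotomy on `(L1, L2')`. Maximality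
then gives `u1 = u1'`.

For the second claim take `V' ∈ 𝒢_{u2}(L2')` and split `x ∈ V'` as `y + z` along `L1 ⊕ L2`.
The projection hypothesis puts all these `y` in one `U₁ ∈ 𝒢_{u1}(L1)`, the `z` lie in one
`U₂ ∈ 𝒢_{u2}(L2)`, and `V' ∩ L1 = 0` gives `‖y‖ ≤ R ‖z‖`. Since `y` decays and `z` grows
uniformly, after a fixed gap `N` the `z`-part dominates and `x` grows like `e^{α(n-m)}`;
gaps shorter than `N` are controlled by the bound on `‖A(n)⁻¹‖`. So `(L1, L2')` carries a
dichotomy with dimensions `(u1, u2)`, and maximality of `u2'` gives `u2 ≤ u2'`.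
-/

open Module Submodule

theorem Submodule.exists_le_le_finrank_eq {K V : Type*} [DivisionRing K] [AddCommGroup V]
    [Module K V] [FiniteDimensional K V] {W L : Submodule K V} (hWL : W ≤ L) {j : ℕ}
    (hWj : finrank K W ≤ j) (hjL : j ≤ finrank K L) :
    ∃ U : Submodule K V, W ≤ U ∧ U ≤ L ∧ finrank K U = j := by
  obtain ⟨k, rfl⟩ := Nat.exists_eq_add_of_le hWj
  induction k generalizing W with
  | zero => exact ⟨W, le_rfl, hWL, rfl⟩
  | succ k ih =>
    obtain ⟨x, hxL, hxW⟩ :=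
      SetLike.exists_of_lt (lt_of_le_of_ne hWL (by rintro rfl; omega))
    have hrank := finrank_sup_span_singleton hxW
    obtain ⟨U, hWU, hUL, hU⟩ :=
      ih (sup_le hWL (span_singleton_le_iff_mem _ _ |>.2 hxL)) (by omega) (by omega)
    exact ⟨U, le_sup_left.trans hWU, hUL, by omega⟩

theorem LinearMap.exists_norm_le_mul_norm_of_ker_eq_bot {𝕜 E F G : Type*}
    [NontriviallyNormedField 𝕜] [CompleteSpace 𝕜] [NormedAddCommGroup E] [NormedSpace 𝕜 E]
    [NormedAddCommGroup F] [NormedSpace 𝕜 F] [FiniteDimensional 𝕜 F]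
    [NormedAddCommGroup G] [NormedSpace 𝕜 G] (f : E →ₗ[𝕜] G) {g : E →ₗ[𝕜] F}
    (hg : LinearMap.ker g = ⊥) : ∃ R, 0 ≤ R ∧ ∀ x, ‖f x‖ ≤ R * ‖g x‖ := by
  obtain ⟨h, hh⟩ := g.exists_leftInverse_of_injective hg
  let T := LinearMap.toContinuousLinearMap (f ∘ₗ h)
  refine ⟨‖T‖, norm_nonneg _, fun x => ?_⟩
  calc ‖f x‖ = ‖T (g x)‖ := by simp [T, ← LinearMap.comp_apply h g, hh]
    _ ≤ ‖T‖ * ‖g x‖ := T.le_opNorm _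

variable {d : ℕ} {A : ℕ → (Euc d ≃L[ℝ] Euc d)}

theorem IsCover.le_finrank {j : ℕ} {L : Submodule ℝ (Euc d)} (h : IsCover (Gr j L) L) :
    j ≤ finrank ℝ L := by
  have h0 : (0 : Euc d) ∈ ⋃ U ∈ Gr j L, (U : Set (Euc d)) := h.2 ▸ L.zero_mem
  obtain ⟨U, ⟨hUL, hU⟩, -⟩ := mem_iUnion₂.1 h0
  exact hU ▸ finrank_mono hUL

theorem isCover_gr {j : ℕ} {L : Submodule ℝ (Euc d)} (hj : 1 ≤ j)
    (hjL : j ≤ finrank ℝ L) : IsCover (Gr j L) L := by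
  refine ⟨fun U hU => hU.1, subset_antisymm (iUnion₂_subset fun U hU => hU.1) fun x hx => ?_⟩
  have hx1 : finrank ℝ (ℝ ∙ x) ≤ j :=
    (finrank_span_le_card ({x} : Set (Euc d))).trans (by simpa)
  obtain ⟨U, hxU, hUL, hU⟩ :=
    exists_le_le_finrank_eq ((span_singleton_le_iff_mem _ _).2 hx) hx1 hjL
  exact mem_iUnion₂.2 ⟨U, ⟨hUL, hU⟩, hxU (mem_span_singleton_self x)⟩

theorem sol_add (n : ℕ) (x y : Euc d) : sol A n (x + y) = sol A n x + sol A n y := by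
  induction n with
  | zero => rfl
  | succ n ih => simp only [sol, ih, map_add]

theorem norm_sol_le_pow_mul_norm_sol {c : ℝ}
    (hAinv : ∀ k, ‖((A k).symm : Euc d →L[ℝ] Euc d)‖ ≤ c) {m n : ℕ} (hmn : m ≤ n)
    (x : Euc d) : ‖sol A m x‖ ≤ c ^ (n - m) * ‖sol A n x‖ := by
  induction n, hmn using Nat.le_induction with
  | base => simp
  | succ n hmn ih =>
    have hc : 0 ≤ c := (norm_nonneg _).trans (hAinv 0)
    have hstep : ‖sol A n x‖ ≤ c * ‖sol A (n + 1) x‖ := by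
      calc ‖sol A n x‖ = ‖((A n).symm : Euc d →L[ℝ] Euc d) (sol A (n + 1) x)‖ := by
            simp [sol]
        _ ≤ c * ‖sol A (n + 1) x‖ := ContinuousLinearMap.le_of_opNorm_le _ (hAinv n) _
    calc ‖sol A m x‖ ≤ c ^ (n - m) * ‖sol A n x‖ := ih
      _ ≤ c ^ (n - m) * (c * ‖sol A (n + 1) x‖) := by gcongr
      _ = c ^ (n + 1 - m) * ‖sol A (n + 1) x‖ := by
        rw [Nat.sub_add_comm hmn, pow_succ, mul_assoc]

theorem D1u.mono {γ γ' : ℝ} {U : Submodule ℝ (Euc d)} (h : D1u A γ U) (hγ : γ ≤ γ') :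
    D1u A γ' U := by
  obtain ⟨C, hC, hb⟩ := h
  refine ⟨C, hC, fun m n hmn x hx => (hb m n hmn x hx).trans ?_⟩
  have : (m : ℝ) ≤ n := by exact_mod_cast hmn
  gcongr

theorem D2u.mono {γ γ' : ℝ} {U : Submodule ℝ (Euc d)} (h : D2u A γ' U) (hγ : γ ≤ γ') :
    D2u A γ U := by
  obtain ⟨C, hC, hb⟩ := h
  refine ⟨C, hC, fun m n hmn x hx => le_trans ?_ (hb m n hmn x hx)⟩
  have : (m : ℝ) ≤ n := by exact_mod_cast hmn
  gcongr

theorem D1u.exists_norm_sol_le {γ : ℝ} {U : Submodule ℝ (Euc d)} (h : D1u A γ U)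
    (hγ : γ ≤ 0) : ∃ C > 0, ∀ n, ∀ x ∈ U, ‖sol A n x‖ ≤ C * ‖x‖ := by
  obtain ⟨C, hC, hb⟩ := h
  refine ⟨C, hC, fun n x hx => ?_⟩
  have hn := hb 0 n n.zero_le x hx
  have he : Real.exp (γ * n) ≤ 1 :=
    Real.exp_le_one_iff.2 (mul_nonpos_of_nonpos_of_nonneg hγ n.cast_nonneg)
  simp only [sol, Nat.cast_zero, sub_zero] at hn
  calc ‖sol A n x‖ ≤ C * Real.exp (γ * n) * ‖x‖ := hn
    _ ≤ C * 1 * ‖x‖ := by gcongr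
    _ = C * ‖x‖ := by ring

theorem D2u.exists_mul_norm_le_norm_sol {γ : ℝ} {U : Submodule ℝ (Euc d)} (h : D2u A γ U)
    (hγ : 0 ≤ γ) : ∃ C > 0, ∀ n, ∀ x ∈ U, C * ‖x‖ ≤ ‖sol A n x‖ := by
  obtain ⟨C, hC, hb⟩ := h
  refine ⟨C, hC, fun n x hx => ?_⟩
  have hn := hb 0 n n.zero_le x hx
  have he : 1 ≤ Real.exp (γ * n) := Real.one_le_exp_iff.2 (mul_nonneg hγ n.cast_nonneg)
  simp only [sol, Nat.cast_zero, sub_zero] at hn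
  calc C * ‖x‖ = C * 1 * ‖x‖ := by ring
    _ ≤ C * Real.exp (γ * n) * ‖x‖ := by gcongr
    _ ≤ ‖sol A n x‖ := hn

theorem D2u_of_large_gaps {c γ C : ℝ}
    (hAinv : ∀ k, ‖((A k).symm : Euc d →L[ℝ] Euc d)‖ ≤ c) (hγ : 0 ≤ γ) (hC : 0 < C)
    {U : Submodule ℝ (Euc d)} (N : ℕ)
    (h : ∀ m n : ℕ, m + N ≤ n → ∀ x ∈ U,
      C * Real.exp (γ * ((n : ℝ) - m)) * ‖sol A m x‖ ≤ ‖sol A n x‖) :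
    D2u A γ U := by
  set b := max c 1
  have hb : ∀ k, ‖((A k).symm : Euc d →L[ℝ] Euc d)‖ ≤ b :=
    fun k => (hAinv k).trans (le_max_left _ _)
  have hb1 : 1 ≤ b := le_max_right _ _
  set K := b ^ N * Real.exp (γ * N) with hKdef
  refine ⟨min C K⁻¹, by positivity, fun m n hmn x hx => ?_⟩
  rcases le_or_gt (m + N) n with hN | hN
  · calc min C K⁻¹ * Real.exp (γ * ((n : ℝ) - m)) * ‖sol A m x‖
        ≤ C * Real.exp (γ * ((n : ℝ) - m)) * ‖sol A m x‖ := by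
          gcongr; exact min_le_left _ _
      _ ≤ ‖sol A n x‖ := h m n hN x hx
  · have hgap : (n : ℝ) - m ≤ N := by
      rw [sub_le_iff_le_add]; exact_mod_cast hN.le.trans (by omega)
    have hback : ‖sol A m x‖ ≤ b ^ N * ‖sol A n x‖ :=
      (norm_sol_le_pow_mul_norm_sol hb hmn x).trans (by gcongr; omega)
    calc min C K⁻¹ * Real.exp (γ * ((n : ℝ) - m)) * ‖sol A m x‖
        ≤ K⁻¹ * Real.exp (γ * N) * (b ^ N * ‖sol A n x‖) := by
          gcongr; exact min_le_right _ _
      _ = ‖sol A n x‖ := by rw [hKdef]; field_simp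

theorem exists_norm_sol_le_mul_norm_sol {α R : ℝ} (hα : 0 ≤ α) (hR : 0 ≤ R)
    {U₁ U₂ : Submodule ℝ (Euc d)} (h₁ : D1u A (-α) U₁) (h₂ : D2u A α U₂) :
    ∃ R' ≥ 0, ∀ n, ∀ y ∈ U₁, ∀ z ∈ U₂, ‖y‖ ≤ R * ‖z‖ →
      ‖sol A n y‖ ≤ R' * ‖sol A n z‖ := by
  obtain ⟨C₁, hC₁, h₁⟩ := h₁.exists_norm_sol_le (by linarith)
  obtain ⟨C₂, hC₂, h₂⟩ := h₂.exists_mul_norm_le_norm_sol hα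
  refine ⟨C₁ * R / C₂, by positivity, fun n y hy z hz hyz => ?_⟩
  calc ‖sol A n y‖ ≤ C₁ * ‖y‖ := h₁ n y hy
    _ ≤ C₁ * (R * ‖z‖) := by gcongr
    _ = C₁ * R / C₂ * (C₂ * ‖z‖) := by field_simp
    _ ≤ C₁ * R / C₂ * ‖sol A n z‖ := by gcongr; exact h₂ n z hz

theorem D2u_of_forall_eq_add {c α R : ℝ}
    (hAinv : ∀ k, ‖((A k).symm : Euc d →L[ℝ] Euc d)‖ ≤ c) (hα : 0 < α) (hR : 0 ≤ R)
    {V U₁ U₂ : Submodule ℝ (Euc d)} (h₁ : D1u A (-α) U₁) (h₂ : D2u A α U₂)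
    (hsplit : ∀ x ∈ V, ∃ y ∈ U₁, ∃ z ∈ U₂, x = y + z ∧ ‖y‖ ≤ R * ‖z‖) :
    D2u A α V := by
  obtain ⟨R', hR', hcomp⟩ := exists_norm_sol_le_mul_norm_sol hα.le hR h₁ h₂
  obtain ⟨C₁, hC₁, h₁⟩ := h₁
  obtain ⟨C₂, hC₂, h₂⟩ := h₂
  obtain ⟨N, hN⟩ := exists_nat_ge (2 * C₁ * R' / (C₂ * α))
  have hNgap : C₁ * R' ≤ C₂ / 2 * Real.exp (α * N) := by
    have := Real.add_one_le_exp (α * N)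
    rw [div_le_iff₀ (by positivity)] at hN
    nlinarith
  refine D2u_of_large_gaps hAinv hα.le (by positivity : 0 < C₂ / 2 / (1 + R')) N
    fun m n hmn x hx => ?_
  obtain ⟨y, hy, z, hz, rfl, hyz⟩ := hsplit x hx
  set E := Real.exp (α * ((n : ℝ) - m))
  have hE : C₁ * R' * E⁻¹ ≤ C₂ / 2 * E := by
    have hmn' : (N : ℝ) ≤ n - m := by
      rw [le_sub_iff_add_le']; exact_mod_cast hmn
    have hEE : Real.exp (α * N) ≤ E * E := by
      rw [← Real.exp_add]; gcongr; nlinarith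
    rw [mul_inv_le_iff₀ (Real.exp_pos _)]
    calc C₁ * R' ≤ C₂ / 2 * Real.exp (α * N) := hNgap
      _ ≤ C₂ / 2 * (E * E) := by gcongr
      _ = C₂ / 2 * E * E := by ring
  have hym := hcomp m y hy z hz hyz
  have hyn : ‖sol A n y‖ ≤ C₁ * E⁻¹ * ‖sol A m y‖ := by
    simpa only [E, neg_mul, Real.exp_neg] using h₁ m n (by omega) y hy
  have hzn : C₂ * E * ‖sol A m z‖ ≤ ‖sol A n z‖ := h₂ m n (by omega) z hz
  rw [sol_add, sol_add]
  calc C₂ / 2 / (1 + R') * E * ‖sol A m y + sol A m z‖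
      ≤ C₂ / 2 / (1 + R') * E * ((1 + R') * ‖sol A m z‖) := by
        gcongr
        linarith [norm_add_le (sol A m y) (sol A m z)]
    _ = C₂ * E * ‖sol A m z‖ - C₂ / 2 * E * ‖sol A m z‖ := by field_simp; ring
    _ ≤ C₂ * E * ‖sol A m z‖ - C₁ * R' * E⁻¹ * ‖sol A m z‖ := by gcongr
    _ ≤ C₂ * E * ‖sol A m z‖ - C₁ * E⁻¹ * ‖sol A m y‖ := by
        have : C₁ * E⁻¹ * ‖sol A m y‖ ≤ C₁ * E⁻¹ * (R' * ‖sol A m z‖) := by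
          gcongr
        linarith
    _ ≤ ‖sol A n z‖ - ‖sol A n y‖ := by linarith
    _ ≤ ‖sol A n y + sol A n z‖ := by
        have := norm_sub_le (sol A n y + sol A n z) (sol A n y)
        rw [add_sub_cancel_left] at this
        linarith

theorem DichotomyDim0.mix {L1 L2 L1' L2' : Submodule ℝ (Euc d)} {j1 j2 j1' j2' : ℕ}
    (h : DichotomyDim0 A L1 L2 j1 j2) (h' : DichotomyDim0 A L1' L2' j1' j2')
    (hc : IsCompl L1 L2') : DichotomyDim0 A L1 L2' j1 j2' := by
  obtain ⟨-, hcov1, -, α, hα, hD1, -⟩ := h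
  obtain ⟨-, -, hcov2', α', hα', -, hD2'⟩ := h'
  exact ⟨hc, hcov1, hcov2', min α α', lt_min hα hα',
    fun U hU => (hD1 U hU).mono (neg_le_neg (min_le_left α α')),
    fun U hU => (hD2' U hU).mono (min_le_right α α')⟩

theorem DichotomyDim0.of_finrank_map_projection_le {c : ℝ}
    (hAinv : ∀ k, ‖((A k).symm : Euc d →L[ℝ] Euc d)‖ ≤ c)
    {L1 L2 L2' : Submodule ℝ (Euc d)} {u1 u2 : ℕ} (h : DichotomyDim0 A L1 L2 u1 u2)
    (hc : IsCompl L1 L2) (hc' : IsCompl L1 L2') (hu2 : 1 ≤ u2)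
    (hproj : ∀ V' ≤ L2', finrank ℝ V' = u2 →
      finrank ℝ (V'.map (L1.projection L2 hc)) ≤ u1) :
    DichotomyDim0 A L1 L2' u1 u2 := by
  obtain ⟨-, hcov1, hcov2, α, hα, hD1, hD2⟩ := h
  have hrank : finrank ℝ L2' = finrank ℝ L2 := by
    have := finrank_add_eq_of_isCompl hc
    have := finrank_add_eq_of_isCompl hc'
    omega
  refine ⟨hc', hcov1, isCover_gr hu2 (hrank ▸ hcov2.le_finrank), α, hα, hD1, ?_⟩
  rintro V' ⟨hV'L2', hV'⟩
  set π := L1.projection L2 hc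
  set σ := L2.projection L1 hc.symm
  obtain ⟨U₁, hVU₁, hU₁L1, hU₁⟩ := exists_le_le_finrank_eq
    (map_le_iff_le_comap.2 fun x _ => projection_apply_mem hc x) (hproj V' hV'L2' hV')
    hcov1.le_finrank
  obtain ⟨U₂, hVU₂, hU₂L2, hU₂⟩ := exists_le_le_finrank_eq
    (map_le_iff_le_comap.2 fun x _ => projection_apply_mem hc.symm x)
    (hV' ▸ finrank_map_le σ V') hcov2.le_finrank
  have hσ : LinearMap.ker (σ ∘ₗ V'.subtype) = ⊥ := by
    refine LinearMap.ker_eq_bot'.2 fun x hx => ?_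
    have hxL1 : (x : Euc d) ∈ L1 := (projection_apply_eq_zero_iff hc.symm).1 hx
    exact Subtype.ext (disjoint_def.1 hc'.disjoint x hxL1 (hV'L2' x.2))
  obtain ⟨R, hR, hπσ⟩ :=
    (π ∘ₗ V'.subtype).exists_norm_le_mul_norm_of_ker_eq_bot hσ
  refine D2u_of_forall_eq_add hAinv hα hR (hD1 U₁ ⟨hU₁L1, hU₁⟩) (hD2 U₂ ⟨hU₂L2, hU₂⟩)
    fun x hx => ⟨π x, hVU₁ (mem_map_of_mem hx), σ x, hVU₂ (mem_map_of_mem hx), ?_, hπσ ⟨x, hx⟩⟩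
  exact (projection_add_projection_eq_self hc x).symm

theorem max_unif_dims_independence_general {d : ℕ}
    (A : ℕ → (Euc d ≃L[ℝ] Euc d)) (hA : BddSys A)
    (L1 L2 L2' : Submodule ℝ (Euc d))
    (hc : IsCompl L1 L2) (hc' : IsCompl L1 L2')
    (u1 u2 u1' u2' : ℕ)
    (hm : MaxUnifDims A L1 L2 u1 u2) (hm' : MaxUnifDims A L1 L2' u1' u2') :
    u1 = u1' ∧
    ((∀ V' : Submodule ℝ (Euc d), V' ≤ L2' → Module.finrank ℝ V' = u2 →
        Module.finrank ℝ
          (V'.map (L1.subtype ∘ₗ Submodule.linearProjOfIsCompl L1 L2 hc)) ≤ u1) →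
      u2 ≤ u2') := by
  obtain ⟨-, c, hAinv⟩ := hA
  refine ⟨le_antisymm (hm'.2 _ _ (hm.1.mix hm'.1 hc')).1 (hm.2 _ _ (hm'.1.mix hm.1 hc)).1,
    fun hproj => ?_⟩
  rcases Nat.eq_zero_or_pos u2 with hu2 | hu2
  · omega
  · exact (hm'.2 _ _ (hm.1.of_finrank_map_projection_le hAinv hc hc' hu2 hproj)).2

/-- **Independence of maximal uniformity dimensions of the splitting.** -/
theorem max_unif_dims_independence {d : ℕ} (hd : 1 ≤ d)
    (A : ℕ → (Euc d ≃L[ℝ] Euc d)) (hA : BddSys A)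
    (L1 L2 L2' : Submodule ℝ (Euc d))
    (hc : IsCompl L1 L2) (hc' : IsCompl L1 L2')
    (u1 u2 u1' u2' : ℕ)
    (hm : MaxUnifDims A L1 L2 u1 u2) (hm' : MaxUnifDims A L1 L2' u1' u2') :
    u1 = u1' ∧
    ((∀ V' : Submodule ℝ (Euc d), V' ≤ L2' → Module.finrank ℝ V' = u2 →
        Module.finrank ℝ
          (V'.map (L1.subtype ∘ₗ Submodule.linearProjOfIsCompl L1 L2 hc)) ≤ u1) →
      u2 ≤ u2') :=
  max_unif_dims_independence_general A hA L1 L2 L2' hc hc' u1 u2 u1' u2' hm hm'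

end
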